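/- For every positive integer n, (n-1)! - a_n = ∑_{k=1}^{n-1} C(n-1, k-1) · (n-k-1)! · a_k, where a_n = ∑_{k=1}^{n} (-1)^(k-1) (k-1)! c(n,k). -/

import Mathlib

/-- The number of cycles (orbits, including fixed points) of a permutation. -/
noncomputable def cycleCount {n : ℕ} (σ : Equiv.Perm (Fin n)) : ℕ :=
  Nat.card (Quotient (MulAction.orbitRel (Subgroup.zpowers σ) (Fin n)))

/-- The unsigned Stirling number of the first kind: the number of permutations of an
`n`-element set with exactly `k` cycles. -/
noncomputable def stirling1 (n k : ℕ) : ℕ :=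
  Nat.card {σ : Equiv.Perm (Fin n) // cycleCount σ = k}

/-- `a n = ∑_{k=1}^n (-1)^(k-1) (k-1)! c(n,k)`. -/
noncomputable def a (n : ℕ) : ℤ :=
  ∑ k ∈ Finset.Icc 1 n, (-1 : ℤ) ^ (k - 1) * (Nat.factorial (k - 1) : ℤ) * (stirling1 n k : ℤ)


/-!
`Equiv.Perm.decomposeFin.symm (p, e)` acts on `Fin (n + 1)` as `e` on the successors followed
by `swap 0 p`: for `p = 0` it adds the fixed point `0` to `e`, and for `p = q.succ` it inserts
`0` into the cycle of `e` through `q`. Hence `stirling1` satisfies the recurrence defining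
`c = Nat.stirlingFirst`.

Splitting off the cycle through the last point gives `c(m+1, j+1) = ∑ᵢ C(m,i) (m-i)! c(i,j)`,
and from it, by induction on `m`, `j c(m+1, j+1) = ∑ᵢ C(m,i) (m-i-1)! c(i+1,j)`. Writing
`n = m + 1`, expanding each `a_k` and applying the second identity termwise turns both sides of
the theorem into `∑_{j<m} (-1)^j (j+1)! c(m+1, j+2)`. (With `L = -log (1-x)`, the exponential
generating function of `a` is `log (1 + L)`, and the theorem is the coefficient form of
`(1 + L) A' = 1/(1-x)`.)
-/

open Equiv Equiv.Perm Finset Nat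

namespace Equiv.Perm

variable {α β : Type*}

theorem orbitRel_zpowers_eq_sameCycle_setoid (σ : Perm α) :
    MulAction.orbitRel (Subgroup.zpowers σ) α = SameCycle.setoid σ := by
  ext x y
  rw [MulAction.orbitRel_apply, MulAction.mem_orbit_iff, Subgroup.exists_zpowers]
  exact sameCycle_comm

theorem SameCycle.apply_eq_of_invariant {σ : Perm α} {F : α → β} (hF : ∀ x, F (σ x) = F x)
    {x y : α} (h : SameCycle σ x y) : F x = F y := by
  obtain ⟨i, rfl⟩ := h
  induction i using Int.induction_on generalizing x with
  | zero => rfl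
  | succ k ih => rw [zpow_add_one, mul_apply, ← ih, hF]
  | pred k ih => rw [zpow_sub_one, mul_apply, ← ih]; simpa using hF (σ⁻¹ x)

theorem mk_sameCycle_apply (σ : Perm α) (x : α) :
    (⟦σ x⟧ : Quotient (SameCycle.setoid σ)) = ⟦x⟧ :=
  Quotient.sound (sameCycle_apply_left.2 SameCycle.rfl)

variable {n : ℕ}

theorem mk_succ_apply_decomposeFin_symm (p : Fin (n + 1)) (e : Perm (Fin n)) (v : Fin n) :
    (⟦(e v).succ⟧ : Quotient (SameCycle.setoid (decomposeFin.symm (p, e)))) = ⟦v.succ⟧ := by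
  set τ := decomposeFin.symm (p, e)
  have hτ0 : τ 0 = p := decomposeFin_symm_apply_zero p e
  have hτ : τ v.succ = swap 0 p (e v).succ := decomposeFin_symm_apply_succ e p v
  by_cases hp : (e v).succ = p
  · rw [hp, swap_apply_right] at hτ
    calc (⟦(e v).succ⟧ : Quotient (SameCycle.setoid τ)) = ⟦τ 0⟧ := by rw [hτ0, hp]
      _ = ⟦τ v.succ⟧ := by rw [mk_sameCycle_apply, hτ]
      _ = ⟦v.succ⟧ := mk_sameCycle_apply τ v.succ
  · rw [swap_apply_of_ne_of_ne (Fin.succ_ne_zero _) hp] at hτ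
    rw [← hτ]
    exact mk_sameCycle_apply τ v.succ

theorem SameCycle.succ_decomposeFin_symm {e : Perm (Fin n)} {v w : Fin n} (p : Fin (n + 1))
    (h : SameCycle e v w) : SameCycle (decomposeFin.symm (p, e)) v.succ w.succ :=
  Quotient.exact <| h.apply_eq_of_invariant
    (F := fun v => (⟦v.succ⟧ : Quotient (SameCycle.setoid (decomposeFin.symm (p, e)))))
    (mk_succ_apply_decomposeFin_symm p e)

end Equiv.Perm

section CycleCount

variable {n : ℕ}

theorem cycleCount_eq_card_quotient_sameCycle (σ : Perm (Fin n)) :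
    cycleCount σ = Nat.card (Quotient (SameCycle.setoid σ)) := by
  rw [cycleCount, orbitRel_zpowers_eq_sameCycle_setoid]

theorem cycleCount_decomposeFin_symm_zero (e : Perm (Fin n)) :
    cycleCount (decomposeFin.symm (0, e)) = cycleCount e + 1 := by
  set τ := decomposeFin.symm (0, e)
  have hτ0 : τ 0 = 0 := decomposeFin_symm_apply_zero 0 e
  have hτ : ∀ v : Fin n, τ v.succ = (e v).succ := fun v => by
    simp [τ, decomposeFin_symm_apply_succ]
  let F : Fin (n + 1) → Option (Quotient (SameCycle.setoid e)) :=
    Fin.cases none fun v => some ⟦v⟧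
  have hF : ∀ z, F (τ z) = F z := Fin.cases (by rw [hτ0]) fun v => by
    simp only [F, hτ, Fin.cases_succ, mk_sameCycle_apply]
  let E : Quotient (SameCycle.setoid τ) ≃ Option (Quotient (SameCycle.setoid e)) :=
    { toFun := Quotient.lift F fun _ _ h => h.apply_eq_of_invariant hF
      invFun := fun o =>
        o.elim ⟦0⟧ <| Quotient.map' Fin.succ fun _ _ => .succ_decomposeFin_symm 0
      left_inv := by rintro ⟨z⟩; cases z using Fin.cases <;> rfl
      right_inv := by rintro (_ | ⟨⟨v⟩⟩) <;> rfl }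
  rw [cycleCount_eq_card_quotient_sameCycle, cycleCount_eq_card_quotient_sameCycle,
    Nat.card_congr E, Finite.card_option]

theorem cycleCount_decomposeFin_symm_succ (q : Fin n) (e : Perm (Fin n)) :
    cycleCount (decomposeFin.symm (q.succ, e)) = cycleCount e := by
  set τ := decomposeFin.symm (q.succ, e)
  have hτ0 : τ 0 = q.succ := decomposeFin_symm_apply_zero _ e
  have hτ : ∀ v : Fin n, τ v.succ = swap 0 q.succ (e v).succ := decomposeFin_symm_apply_succ e _
  let F : Fin (n + 1) → Quotient (SameCycle.setoid e) := Fin.cases ⟦q⟧ fun v => ⟦v⟧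
  have hF : ∀ z, F (τ z) = F z := by
    refine Fin.cases (by rw [hτ0]; rfl) fun v => ?_
    rw [hτ]
    by_cases hv : e v = q
    · rw [hv, swap_apply_right]
      show ⟦q⟧ = ⟦v⟧
      rw [← hv]
      exact mk_sameCycle_apply e v
    · rw [swap_apply_of_ne_of_ne (Fin.succ_ne_zero _) (Fin.succ_injective _ |>.ne hv)]
      exact mk_sameCycle_apply e v
  let E : Quotient (SameCycle.setoid τ) ≃ Quotient (SameCycle.setoid e) :=
    { toFun := Quotient.lift F fun _ _ h => h.apply_eq_of_invariant hF
      invFun := Quotient.map' Fin.succ fun _ _ => .succ_decomposeFin_symm q.succ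
      left_inv := by
        rintro ⟨z⟩
        cases z using Fin.cases
        · show ⟦q.succ⟧ = ⟦0⟧
          rw [← hτ0]
          exact mk_sameCycle_apply τ 0
        · rfl
      right_inv := by rintro ⟨v⟩; rfl }
  rw [cycleCount_eq_card_quotient_sameCycle, cycleCount_eq_card_quotient_sameCycle,
    Nat.card_congr E]

end CycleCount

theorem stirling1_eq_sum (n k : ℕ) :
    stirling1 n k = ∑ σ : Perm (Fin n), if cycleCount σ = k then 1 else 0 := by
  rw [stirling1, Nat.card_eq_fintype_card, Fintype.card_subtype, card_filter]

theorem stirling1_succ (n k : ℕ) :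
    stirling1 (n + 1) k =
      n * stirling1 n k + ∑ e : Perm (Fin n), if cycleCount e + 1 = k then 1 else 0 := by
  rw [stirling1_eq_sum, ← decomposeFin.symm.sum_comp, Fintype.sum_prod_type, Fin.sum_univ_succ]
  simp only [cycleCount_decomposeFin_symm_zero, cycleCount_decomposeFin_symm_succ, sum_const,
    Finset.card_univ, Fintype.card_fin, smul_eq_mul, stirling1_eq_sum]
  ring

theorem stirling1_eq_stirlingFirst (n k : ℕ) : stirling1 n k = stirlingFirst n k := by
  induction n generalizing k with
  | zero =>
    have h : ∀ σ : Perm (Fin 0), cycleCount σ = 0 := fun σ => by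
      simp [cycleCount_eq_card_quotient_sameCycle]
    rw [stirling1_eq_sum]
    cases k <;> simp [h]
  | succ n ih =>
    rw [stirling1_succ, ih]
    cases k with
    | zero => cases n <;> simp
    | succ k =>
      simp only [Nat.add_right_cancel_iff, ← stirling1_eq_sum, ih, stirlingFirst_succ_succ]

namespace Nat

theorem succ_choose_mul_factorial_succ_sub {m i : ℕ} (h : i ≤ m) :
    (m + 1).choose i * (m + 1 - i)! = (m + 1) * (m.choose i * (m - i)!) := by
  refine Nat.eq_of_mul_eq_mul_right (factorial_pos i) ?_
  calc (m + 1).choose i * (m + 1 - i)! * i ! = (m + 1).choose i * i ! * (m + 1 - i)! := by ring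
    _ = (m + 1) * (m.choose i * i ! * (m - i)!) := by
      rw [choose_mul_factorial_mul_factorial (le_succ_of_le h),
        choose_mul_factorial_mul_factorial h, factorial_succ]
    _ = (m + 1) * (m.choose i * (m - i)!) * i ! := by ring

theorem stirlingFirst_succ_succ_eq_sum (m j : ℕ) :
    stirlingFirst (m + 1) (j + 1) =
      ∑ i ∈ range (m + 1), m.choose i * (m - i)! * stirlingFirst i j := by
  induction m with
  | zero => simp [stirlingFirst_succ_succ]
  | succ m ih =>
    rw [sum_range_succ, stirlingFirst_succ_succ (m + 1), ih, mul_sum]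
    simp only [choose_self, Nat.sub_self, factorial_zero, one_mul]
    congr 1
    refine sum_congr rfl fun i hi => ?_
    rw [succ_choose_mul_factorial_succ_sub (mem_range_succ_iff.1 hi)]
    ring

theorem mul_stirlingFirst_succ_succ_eq_sum (m j : ℕ) :
    j * stirlingFirst (m + 1) (j + 1) =
      ∑ i ∈ range m, m.choose i * (m - i - 1)! * stirlingFirst (i + 1) j := by
  induction m generalizing j with
  | zero => cases j <;> simp [stirlingFirst_succ_succ]
  | succ m ih =>
    cases j with
    | zero => simp
    | succ j =>
      -- `c(i+1, j+1) = i c(i, j+1) + c(i, j)`: the first part is the induction hypothesis after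
      -- shifting `i`, the second splits by Pascal's rule into it and the previous identity.
      have hshift :
          ∑ i ∈ range (m + 1), (m + 1).choose i * (m - i)! * (i * stirlingFirst i (j + 1)) =
            (m + 1) * ((j + 1) * stirlingFirst (m + 1) (j + 1 + 1)) := by
        rw [sum_range_succ', ih, mul_sum]
        simp only [zero_mul, mul_zero, add_zero, Nat.sub_sub]
        refine sum_congr rfl fun i _ => ?_
        calc _ = (m + 1).choose (i + 1) * (i + 1) *
              ((m - (i + 1))! * stirlingFirst (i + 1) (j + 1)) := by ring
          _ = _ := by rw [← add_one_mul_choose_eq]; ring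
      have hpascal : ∑ i ∈ range (m + 1), (m + 1).choose i * (m - i)! * stirlingFirst i j =
          j * stirlingFirst (m + 1) (j + 1) + stirlingFirst (m + 1) (j + 1) := by
        rw [ih, stirlingFirst_succ_succ_eq_sum, sum_range_succ', sum_range_succ' _ m]
        simp only [choose_succ_succ', add_mul, sum_add_distrib, Nat.sub_sub, choose_zero_right]
        ring
      have hsplit : ∀ i ∈ range (m + 1),
          (m + 1).choose i * (m + 1 - i - 1)! * stirlingFirst (i + 1) (j + 1) =
            (m + 1).choose i * (m - i)! * (i * stirlingFirst i (j + 1)) +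
              (m + 1).choose i * (m - i)! * stirlingFirst i j := fun i _ => by
        rw [stirlingFirst_succ_succ, show m + 1 - i - 1 = m - i by omega]
        ring
      rw [sum_congr rfl hsplit, sum_add_distrib, hshift, hpascal,
        stirlingFirst_succ_succ (m + 1) (j + 1)]
      ring

end Nat

theorem Finset.sum_Icc_one_eq_sum_range {M : Type*} [AddCommMonoid M] (f : ℕ → M) (N : ℕ) :
    ∑ k ∈ Icc 1 N, f k = ∑ i ∈ range N, f (i + 1) := by
  rw [← Ico_add_one_right_eq_Icc, sum_Ico_eq_sum_range, Nat.add_sub_cancel]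
  simp only [add_comm 1]

theorem a_eq_sum_range {N M : ℕ} (h : N ≤ M) :
    a N = ∑ j ∈ range M, (-1 : ℤ) ^ j * j ! * stirlingFirst N (j + 1) := by
  rw [a, sum_Icc_one_eq_sum_range, ← sum_subset (range_subset_range.2 h)]
  · simp only [stirling1_eq_stirlingFirst, Nat.add_sub_cancel]
  · intro j _ hj
    rw [stirlingFirst_eq_zero_of_lt (by simp only [mem_range, not_lt] at hj; omega)]
    simp

theorem factorial_sub_a_succ (m : ℕ) :
    (m ! : ℤ) - a (m + 1) =
      ∑ j ∈ range m, (-1 : ℤ) ^ j * (j + 1)! * stirlingFirst (m + 1) (j + 2) := by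
  rw [a_eq_sum_range le_rfl, sum_range_succ']
  simp [stirlingFirst_one_right, pow_succ]

theorem sum_choose_mul_factorial_mul_a (m : ℕ) :
    ∑ i ∈ range m, (m.choose i : ℤ) * (m - i - 1)! * a (i + 1) =
      ∑ j ∈ range m, (-1 : ℤ) ^ j * (j + 1)! * stirlingFirst (m + 1) (j + 2) := by
  calc _ = ∑ i ∈ range m, ∑ j ∈ range m, (m.choose i : ℤ) * (m - i - 1)! *
        ((-1 : ℤ) ^ j * j ! * stirlingFirst (i + 1) (j + 1)) :=
        sum_congr rfl fun i hi => by
          rw [a_eq_sum_range (mem_range.1 hi), mul_sum]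
    _ = ∑ j ∈ range m, (-1 : ℤ) ^ j * j ! *
        ↑(∑ i ∈ range m, m.choose i * (m - i - 1)! * stirlingFirst (i + 1) (j + 1)) := by
      rw [sum_comm]
      push_cast
      simp only [mul_sum]
      refine sum_congr rfl fun j _ => sum_congr rfl fun i _ => by ring
    _ = _ := by
      simp only [← mul_stirlingFirst_succ_succ_eq_sum, factorial_succ]
      push_cast
      refine sum_congr rfl fun j _ => by ring

/-- The recurrence `(n-1)! - a_n = ∑_{k=1}^{n-1} C(n-1,k-1) (n-k-1)! a_k` for `n ≥ 1`. -/
theorem stmt11 (n : ℕ) (hn : 1 ≤ n) :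
    (Nat.factorial (n - 1) : ℤ) - a n
      = ∑ k ∈ Finset.Icc 1 (n - 1),
          ((n - 1).choose (k - 1) : ℤ) * (Nat.factorial (n - k - 1) : ℤ) * a k := by
  obtain ⟨m, rfl⟩ := Nat.exists_eq_add_of_le' hn
  rw [Nat.add_sub_cancel, factorial_sub_a_succ, ← sum_choose_mul_factorial_mul_a,
    sum_Icc_one_eq_sum_range]
  simp only [Nat.add_sub_cancel, Nat.add_sub_add_right]
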